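/- Let g be a metric on an open set Ω ⊆ ℝ^m, let τ be a smooth covector field satisfying ∇_i τ_j = κ g_{ij} + α_i τ_j + τ_i β_j with Σ_{i,j} g^{ij} α_i τ_j = 0 and Σ_{i,j} g^{ij} β_i τ_j = 0, and let θ : Ω → ℝ be smooth. Let ĝ = e^{2θ} g with covariant derivative ∇̂ built from the Christoffel symbols of ĝ, let τ̂_i = e^{θ} τ_i, and set P = Σ_{k,l} g^{kl} τ_k ∂_l θ. Then ∇̂_i τ̂_j = e^{−θ}(κ + P) ĝ_{ij} + α_i τ̂_j + τ̂_i (β_j − ∂_j θ) on Ω. -/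

import Mathlib

open scoped BigOperators

/-- Partial derivative of `f : ℝ^m → ℝ` in the `i`-th coordinate direction. -/
noncomputable def pd {m : ℕ} (i : Fin m) (f : (Fin m → ℝ) → ℝ) (x : Fin m → ℝ) : ℝ :=
  fderiv ℝ f x (Pi.single i 1)

/-- Christoffel symbols `Γ^k_{ij}` of a matrix-valued field `g`. -/
noncomputable def Christoffel {m : ℕ} (g : (Fin m → ℝ) → Matrix (Fin m) (Fin m) ℝ)
    (k i j : Fin m) (x : Fin m → ℝ) : ℝ :=
  (1 / 2) * ∑ l, (g x)⁻¹ k l *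
    (pd i (fun y => g y l j) x + pd j (fun y => g y l i) x - pd l (fun y => g y i j) x)

/-- Covariant derivative `∇_i τ_j` of a covector field `τ`. -/
noncomputable def covDeriv {m : ℕ} (g : (Fin m → ℝ) → Matrix (Fin m) (Fin m) ℝ)
    (τ : (Fin m → ℝ) → Fin m → ℝ) (i j : Fin m) (x : Fin m → ℝ) : ℝ :=
  pd i (fun y => τ y j) x - ∑ k, Christoffel g k i j x * τ x k

/-- `g` is a metric on `Ω`: smooth, symmetric and invertible there. -/
def IsMetricOn {m : ℕ} (g : (Fin m → ℝ) → Matrix (Fin m) (Fin m) ℝ)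
    (Ω : Set (Fin m → ℝ)) : Prop :=
  (∀ i j, ContDiffOn ℝ (⊤ : ℕ∞) (fun x => g x i j) Ω) ∧
  (∀ x ∈ Ω, (g x).IsSymm) ∧ (∀ x ∈ Ω, IsUnit (g x).det)

lemma pd_mul {m : ℕ} {f h : (Fin m → ℝ) → ℝ} {x : Fin m → ℝ} (i : Fin m)
    (hf : DifferentiableAt ℝ f x) (hh : DifferentiableAt ℝ h x) :
    pd i (fun y => f y * h y) x = pd i f x * h x + f x * pd i h x := by
  unfold pd
  rw [fderiv_fun_mul hf hh]
  simp only [ContinuousLinearMap.add_apply, ContinuousLinearMap.smul_apply, smul_eq_mul]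
  ring

lemma pd_exp {m : ℕ} {f : (Fin m → ℝ) → ℝ} {x : Fin m → ℝ} (i : Fin m)
    (hf : DifferentiableAt ℝ f x) :
    pd i (fun y => Real.exp (f y)) x = Real.exp (f x) * pd i f x := by
  unfold pd
  rw [fderiv_exp hf]
  simp

/-- under `ĝ = e^{2θ} g`, the vector `τ̂ = e^θ τ` satisfies
`∇̂_i τ̂_j = e^{-θ}(κ + P) ĝ_ij + α_i τ̂_j + τ̂_i (β_j - ∂_j θ)`. -/
theorem conformal_exp_theta_tau
    {m : ℕ} (Ω : Set (Fin m → ℝ)) (hΩ : IsOpen Ω)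
    (g : (Fin m → ℝ) → Matrix (Fin m) (Fin m) ℝ) (hg : IsMetricOn g Ω)
    (τ : (Fin m → ℝ) → Fin m → ℝ) (hτ : ∀ j, ContDiffOn ℝ (⊤ : ℕ∞) (fun x => τ x j) Ω)
    (κ : (Fin m → ℝ) → ℝ) (hκ : ContDiffOn ℝ (⊤ : ℕ∞) κ Ω)
    (α β : (Fin m → ℝ) → Fin m → ℝ)
    (hα : ∀ j, ContDiffOn ℝ (⊤ : ℕ∞) (fun x => α x j) Ω)
    (hβ : ∀ j, ContDiffOn ℝ (⊤ : ℕ∞) (fun x => β x j) Ω)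
    (heq : ∀ x ∈ Ω, ∀ i j : Fin m,
      covDeriv g τ i j x = κ x * g x i j + α x i * τ x j + τ x i * β x j)
    (hατ : ∀ x ∈ Ω, ∑ i, ∑ j, (g x)⁻¹ i j * α x i * τ x j = 0)
    (hβτ : ∀ x ∈ Ω, ∑ i, ∑ j, (g x)⁻¹ i j * β x i * τ x j = 0)
    (θ : (Fin m → ℝ) → ℝ) (hθ : ContDiffOn ℝ (⊤ : ℕ∞) θ Ω)
    (ghat : (Fin m → ℝ) → Matrix (Fin m) (Fin m) ℝ)
    (hghat : ∀ x, ghat x = Matrix.of fun i j => Real.exp (2 * θ x) * g x i j)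
    (τh : (Fin m → ℝ) → Fin m → ℝ)
    (hτh : ∀ x i, τh x i = Real.exp (θ x) * τ x i)
    (P : (Fin m → ℝ) → ℝ)
    (hP : ∀ x, P x = ∑ k, ∑ l, (g x)⁻¹ k l * τ x k * pd l θ x) :
    ∀ x ∈ Ω, ∀ i j : Fin m,
      covDeriv ghat τh i j x =
        Real.exp (-(θ x)) * (κ x + P x) * ghat x i j
        + α x i * τh x j + τh x i * (β x j - pd j θ x) := by
  obtain ⟨hgsm, hgsymm, hgdet⟩ := hg
  have hgs : ∀ y, ghat y = Real.exp (2 * θ y) • g y := by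
    intro y; rw [hghat]; ext a b; simp [Matrix.smul_apply]
  intro x hx i j
  have hmem : Ω ∈ nhds x := hΩ.mem_nhds hx
  have dθ : DifferentiableAt ℝ θ x := (hθ.contDiffAt hmem).differentiableAt (by simp)
  have dg : ∀ a b, DifferentiableAt ℝ (fun y => g y a b) x :=
    fun a b => ((hgsm a b).contDiffAt hmem).differentiableAt (by simp)
  have dτ : ∀ a, DifferentiableAt ℝ (fun y => τ y a) x :=
    fun a => ((hτ a).contDiffAt hmem).differentiableAt (by simp)
  have dE2 : DifferentiableAt ℝ (fun y => Real.exp (2 * θ y)) x := (dθ.const_mul 2).exp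
  have dE : DifferentiableAt ℝ (fun y => Real.exp (θ y)) x := dθ.exp
  have hE2pd : ∀ a : Fin m, pd a (fun y => Real.exp (2 * θ y)) x
      = Real.exp (2 * θ x) * (2 * pd a θ x) := by
    intro a
    rw [pd_exp a (dθ.const_mul 2)]
    congr 1
    unfold pd
    rw [fderiv_const_mul dθ]
    simp
  have hinv : (ghat x)⁻¹ = Real.exp (-(2 * θ x)) • (g x)⁻¹ := by
    apply Matrix.inv_eq_right_inv
    rw [hgs, Matrix.smul_mul, Matrix.mul_smul, smul_smul,
      Matrix.mul_nonsing_inv _ (hgdet x hx), ← Real.exp_add]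
    have : 2 * θ x + -(2 * θ x) = 0 := by ring
    rw [this, Real.exp_zero, one_smul]
  have hdelta : ∀ a b : Fin m, ∑ l, (g x)⁻¹ a l * g x l b = if a = b then 1 else 0 := by
    intro a b
    have h1 : (g x)⁻¹ * g x = 1 := Matrix.nonsing_inv_mul _ (hgdet x hx)
    calc ∑ l, (g x)⁻¹ a l * g x l b = ((g x)⁻¹ * g x) a b := (Matrix.mul_apply).symm
      _ = (1 : Matrix (Fin m) (Fin m) ℝ) a b := by rw [h1]
      _ = if a = b then 1 else 0 := Matrix.one_apply
  have pdghat : ∀ (a l b : Fin m), pd a (fun y => ghat y l b) x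
      = Real.exp (2 * θ x) * (2 * pd a θ x * g x l b + pd a (fun y => g y l b) x) := by
    intro a l b
    have hfun : (fun y => ghat y l b) = fun y => Real.exp (2 * θ y) * g y l b := by
      funext y; rw [hgs]; simp [Matrix.smul_apply]
    rw [hfun, pd_mul a dE2 (dg l b), hE2pd]
    ring
  have hE1 : Real.exp (-(2 * θ x)) * Real.exp (2 * θ x) = 1 := by
    rw [← Real.exp_add]
    have : -(2 * θ x) + 2 * θ x = 0 := by ring
    rw [this, Real.exp_zero]
  have hChr : ∀ k : Fin m, Christoffel ghat k i j x
      = Christoffel g k i j x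
        + ((if k = j then 1 else 0) * pd i θ x + (if k = i then 1 else 0) * pd j θ x
          - g x i j * ∑ l, (g x)⁻¹ k l * pd l θ x) := by
    intro k
    rw [← hdelta k j, ← hdelta k i]
    unfold Christoffel
    rw [hinv]
    simp only [Matrix.smul_apply, smul_eq_mul, pdghat]
    rw [Finset.mul_sum]
    rw [Finset.sum_congr rfl (fun l _ => show
      1 / 2 * (Real.exp (-(2 * θ x)) * (g x)⁻¹ k l *
        (Real.exp (2 * θ x) * (2 * pd i θ x * g x l j + pd i (fun y => g y l j) x)
          + Real.exp (2 * θ x) * (2 * pd j θ x * g x l i + pd j (fun y => g y l i) x)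
          - Real.exp (2 * θ x) * (2 * pd l θ x * g x i j + pd l (fun y => g y i j) x)))
      = 1 / 2 * ((g x)⁻¹ k l *
          (pd i (fun y => g y l j) x + pd j (fun y => g y l i) x - pd l (fun y => g y i j) x))
        + ((g x)⁻¹ k l * g x l j * pd i θ x + (g x)⁻¹ k l * g x l i * pd j θ x
          - g x i j * ((g x)⁻¹ k l * pd l θ x)) from by
        linear_combination (1 / 2 * (g x)⁻¹ k l *
          ((2 * pd i θ x * g x l j + pd i (fun y => g y l j) x)
            + (2 * pd j θ x * g x l i + pd j (fun y => g y l i) x)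
            - (2 * pd l θ x * g x i j + pd l (fun y => g y i j) x))) * hE1)]
    rw [Finset.sum_add_distrib, Finset.sum_sub_distrib, Finset.sum_add_distrib,
      ← Finset.mul_sum, ← Finset.sum_mul, ← Finset.sum_mul, ← Finset.mul_sum]
  have pdτh : ∀ b : Fin m, pd i (fun y => τh y b) x
      = Real.exp (θ x) * pd i θ x * τ x b + Real.exp (θ x) * pd i (fun y => τ y b) x := by
    intro b
    have hfun : (fun y => τh y b) = fun y => Real.exp (θ y) * τ y b := by
      funext y; rw [hτh]
    rw [hfun, pd_mul i dE (dτ b), pd_exp i dθ]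
  have hPsum : ∑ k, (g x i j * ∑ l, (g x)⁻¹ k l * pd l θ x) * (Real.exp (θ x) * τ x k)
      = Real.exp (θ x) * (g x i j * P x) := by
    have L : ∑ k, (g x i j * ∑ l, (g x)⁻¹ k l * pd l θ x) * (Real.exp (θ x) * τ x k)
        = ∑ k, ∑ l, Real.exp (θ x) * (g x i j * ((g x)⁻¹ k l * τ x k * pd l θ x)) := by
      refine Finset.sum_congr rfl fun k _ => ?_
      rw [Finset.mul_sum, Finset.sum_mul]
      exact Finset.sum_congr rfl fun l _ => by ring
    have R : Real.exp (θ x) * (g x i j * P x)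
        = ∑ k, ∑ l, Real.exp (θ x) * (g x i j * ((g x)⁻¹ k l * τ x k * pd l θ x)) := by
      simp only [hP, Finset.mul_sum]
    rw [L, R]
  have hsum : ∑ k, Christoffel ghat k i j x * τh x k
      = Real.exp (θ x) * (∑ k, Christoffel g k i j x * τ x k)
        + Real.exp (θ x) * (pd i θ x * τ x j) + Real.exp (θ x) * (pd j θ x * τ x i)
        - Real.exp (θ x) * (g x i j * P x) := by
    simp only [hChr, hτh]
    simp only [add_mul, sub_mul, ite_mul, one_mul, zero_mul, Finset.sum_add_distrib,
      Finset.sum_sub_distrib, Finset.sum_ite_eq', Finset.mem_univ, if_true]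
    rw [hPsum, Finset.mul_sum]
    rw [Finset.sum_congr rfl (fun k _ => show
      Christoffel g k i j x * (Real.exp (θ x) * τ x k)
        = Real.exp (θ x) * (Christoffel g k i j x * τ x k) from by ring)]
    ring
  have hcv := heq x hx i j
  unfold covDeriv at hcv ⊢
  rw [pdτh j, hsum, hgs x]
  simp only [Matrix.smul_apply, smul_eq_mul, hτh]
  have hEE : Real.exp (-(θ x)) * Real.exp (2 * θ x) = Real.exp (θ x) := by
    rw [← Real.exp_add]
    have : -(θ x) + 2 * θ x = θ x := by ring
    rw [this]
  linear_combination Real.exp (θ x) * hcv - (κ x + P x) * g x i j * hEE
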